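/- Let $k$ be a field, $R = k[x,y]$, $j \geq 1$, and let $N$ be the $R$-module with generators $\beta_0, \dots, \beta_j$ and relations $x^m \beta_{m+i} = y^m \beta_i$ for $1 \leq m \leq j$, $0 \leq i \leq j-m$. Then $N$ is isomorphic to the ideal $I = (x^j, x^{j-1}y, \dots, y^j) \subseteq R$, via $\beta_i \mapsto x^{j-i} y^i$. -/

import Mathlib

/-!
The map `ψ : R^(j+1) → R`, `e_i ↦ x^(j-i) y^i`, has image `I`, and the relations are, up to sign,
exactly the pairwise syzygies `(lcm / m_i) e_i - (lcm / m_i') e_i'` of the monomials `m_i`.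
For any finite family of monomials these generate the kernel: the `k`-linear map sending `x^a` to
the class of `x^a / m_i • e_i`, for any `i` with `m_i ∣ x^a`, does not depend on the choice of `i`
modulo syzygies, and it is a left inverse of the map induced by `ψ` on the quotient.
-/

open MvPolynomial

/-- The relation set `{x^m • β_{m+i} - y^m • β_i : 1 ≤ m ≤ j, 0 ≤ i ≤ j - m}` in `R^(j+1)`. -/
def relSet (k : Type*) [Field k] (j : ℕ) : Set (Fin (j + 1) → MvPolynomial (Fin 2) k) :=
  {v | ∃ m, ∃ i, ∃ (_ : 1 ≤ m) (hm : m ≤ j) (hi : i ≤ j - m),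
    v = ((X 0 : MvPolynomial (Fin 2) k) ^ m) •
          (Pi.single (⟨m + i, by omega⟩ : Fin (j + 1)) 1 : Fin (j + 1) → MvPolynomial (Fin 2) k)
        - ((X 1 : MvPolynomial (Fin 2) k) ^ m) •
          (Pi.single (⟨i, by omega⟩ : Fin (j + 1)) 1 : Fin (j + 1) → MvPolynomial (Fin 2) k)}

namespace MvPolynomial

variable {σ ι k : Type*} [CommRing k] [DecidableEq ι]

noncomputable def monomialCombination [Fintype ι] (m : ι → σ →₀ ℕ) :
    (ι → MvPolynomial σ k) →ₗ[MvPolynomial σ k] MvPolynomial σ k :=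
  Fintype.linearCombination _ fun i => monomial (m i) 1

noncomputable def monomialSyzygy (m : ι → σ →₀ ℕ) (i i' : ι) : ι → MvPolynomial σ k :=
  monomial (m i ⊔ m i' - m i) 1 • Pi.single i 1 - monomial (m i ⊔ m i' - m i') 1 • Pi.single i' 1

def monomialSyzygies (m : ι → σ →₀ ℕ) : Set (ι → MvPolynomial σ k) :=
  {v | ∃ i i', monomialSyzygy m i i' = v}

open Classical in
noncomputable def syzygyQuotientSection (m : ι → σ →₀ ℕ) :
    MvPolynomial σ k →ₗ[k]
      (ι → MvPolynomial σ k) ⧸ Submodule.span (MvPolynomial σ k) (monomialSyzygies m) :=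
  (basisMonomials σ k).constr k fun a =>
    if h : ∃ i, m i ≤ a then
      Submodule.Quotient.mk (monomial (a - m h.choose) (1 : k) • Pi.single h.choose 1)
    else 0

variable {m : ι → σ →₀ ℕ}

theorem monomialCombination_single [Fintype ι] (i : ι) (p : MvPolynomial σ k) :
    monomialCombination m (Pi.single i p) = p * monomial (m i) 1 :=
  Fintype.linearCombination_apply_single _ _ _ _

theorem monomialSyzygy_self (i : ι) : monomialSyzygy (k := k) m i i = 0 :=
  sub_self _

theorem monomialSyzygy_swap (i i' : ι) :
    monomialSyzygy (k := k) m i' i = -monomialSyzygy m i i' := by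
  rw [monomialSyzygy, monomialSyzygy, sup_comm, neg_sub]

theorem monomial_tsub_mul_monomial {a b : σ →₀ ℕ} (h : b ≤ a) :
    (monomial (a - b) 1 * monomial b 1 : MvPolynomial σ k) = monomial a 1 := by
  rw [monomial_mul, tsub_add_cancel_of_le h, mul_one]

theorem monomialCombination_monomialSyzygy [Fintype ι] (i i' : ι) :
    monomialCombination m (monomialSyzygy (k := k) m i i') = 0 := by
  simp only [monomialSyzygy, map_sub, map_smul, monomialCombination_single, smul_eq_mul, one_mul,
    monomial_tsub_mul_monomial le_sup_left, monomial_tsub_mul_monomial le_sup_right, sub_self]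

theorem span_monomialSyzygies_le_ker [Fintype ι] :
    Submodule.span (MvPolynomial σ k) (monomialSyzygies m) ≤
      LinearMap.ker (monomialCombination (k := k) m) := by
  rw [Submodule.span_le]
  rintro _ ⟨i, i', rfl⟩
  exact monomialCombination_monomialSyzygy i i'

theorem monomial_smul_single_sub_mem_span {a : σ →₀ ℕ} {i i' : ι} (hi : m i ≤ a)
    (hi' : m i' ≤ a) :
    (monomial (a - m i) 1 • Pi.single i 1 - monomial (a - m i') 1 • Pi.single i' 1 :
      ι → MvPolynomial σ k) ∈ Submodule.span (MvPolynomial σ k) (monomialSyzygies m) := by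
  have hsup : m i ⊔ m i' ≤ a := sup_le hi hi'
  have key : ∀ l, m l ≤ m i ⊔ m i' →
      (monomial (a - (m i ⊔ m i')) 1 * monomial (m i ⊔ m i' - m l) 1 : MvPolynomial σ k)
        = monomial (a - m l) 1 := fun l hl => by
    rw [monomial_mul, mul_one, tsub_add_tsub_cancel hsup hl]
  have hmem : monomialSyzygy (k := k) m i i' ∈ monomialSyzygies m := ⟨i, i', rfl⟩
  have := Submodule.smul_mem _ (monomial (a - (m i ⊔ m i')) (1 : k)) (Submodule.subset_span hmem)
  rwa [monomialSyzygy, smul_sub, smul_smul, smul_smul, key i le_sup_left, key i' le_sup_right]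
    at this

theorem syzygyQuotientSection_monomial (d : σ →₀ ℕ) (i : ι) :
    syzygyQuotientSection (k := k) m (monomial (d + m i) 1) =
      Submodule.Quotient.mk (monomial d (1 : k) • Pi.single i 1) := by
  have h : ∃ l, m l ≤ d + m i := ⟨i, le_add_self⟩
  have hb : monomial (d + m i) (1 : k) = basisMonomials σ k (d + m i) := by simp
  rw [hb, syzygyQuotientSection, Module.Basis.constr_basis, dif_pos h, Submodule.Quotient.eq]
  simpa only [add_tsub_cancel_right] using
    monomial_smul_single_sub_mem_span h.choose_spec le_add_self

theorem syzygyQuotientSection_comp_monomialCombination [Fintype ι] :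
    syzygyQuotientSection (k := k) m ∘ₗ (monomialCombination m).restrictScalars k =
      (Submodule.span _ (monomialSyzygies m)).mkQ.restrictScalars k := by
  refine LinearMap.pi_ext' fun i => (basisMonomials σ k).ext fun d => ?_
  simp only [LinearMap.coe_comp, Function.comp_apply, LinearMap.coe_single,
    LinearMap.coe_restrictScalars, coe_basisMonomials, monomialCombination_single, monomial_mul,
    mul_one, syzygyQuotientSection_monomial, Submodule.mkQ_apply, ← Pi.single_smul', smul_eq_mul]

theorem ker_monomialCombination [Fintype ι] :
    LinearMap.ker (monomialCombination (k := k) m) =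
      Submodule.span (MvPolynomial σ k) (monomialSyzygies m) := by
  refine le_antisymm (fun v hv => ?_) span_monomialSyzygies_le_ker
  rw [← Submodule.Quotient.mk_eq_zero, ← Submodule.mkQ_apply, ← LinearMap.restrictScalars_apply k,
    ← syzygyQuotientSection_comp_monomialCombination, LinearMap.comp_apply,
    LinearMap.restrictScalars_apply, LinearMap.mem_ker.mp hv, map_zero]

end MvPolynomial

noncomputable def xyExponent (j : ℕ) (i : Fin (j + 1)) : Fin 2 →₀ ℕ :=
  Finsupp.single 0 (j - i : ℕ) + Finsupp.single 1 (i : ℕ)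

theorem monomial_xyExponent (k : Type*) [CommRing k] (j : ℕ) (i : Fin (j + 1)) :
    monomial (xyExponent j i) (1 : k) = X 0 ^ (j - (i : ℕ)) * X 1 ^ (i : ℕ) := by
  rw [xyExponent, X_pow_eq_monomial, X_pow_eq_monomial, monomial_mul, mul_one]

theorem xyExponent_sup_tsub_of_le {j : ℕ} {i i' : Fin (j + 1)} (h : i' ≤ i) :
    xyExponent j i ⊔ xyExponent j i' - xyExponent j i = Finsupp.single 0 (i - i' : ℕ) ∧
      xyExponent j i ⊔ xyExponent j i' - xyExponent j i' = Finsupp.single 1 (i - i' : ℕ) := by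
  have : (i' : ℕ) ≤ i := h
  constructor <;> ext l <;> fin_cases l <;> simp [xyExponent] <;> omega

theorem monomialSyzygy_xyExponent_of_le (k : Type*) [CommRing k] {j : ℕ} {i i' : Fin (j + 1)}
    (h : i' ≤ i) :
    monomialSyzygy (k := k) (xyExponent j) i i' =
      X 0 ^ (i - i' : ℕ) • Pi.single i 1 - X 1 ^ (i - i' : ℕ) • Pi.single i' 1 := by
  rw [monomialSyzygy, (xyExponent_sup_tsub_of_le h).1, (xyExponent_sup_tsub_of_le h).2,
    X_pow_eq_monomial, X_pow_eq_monomial]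

theorem monomialSyzygy_xyExponent_mem_relSet (k : Type*) [Field k] {j : ℕ} {i i' : Fin (j + 1)}
    (h : i' < i) : monomialSyzygy (xyExponent j) i i' ∈ relSet k j := by
  have : (i' : ℕ) < i := h
  refine ⟨i - i', i', by omega, by omega, by omega, ?_⟩
  rw [monomialSyzygy_xyExponent_of_le k h.le]
  congr
  exact Fin.ext (by simp only; omega)

theorem relSet_subset_monomialSyzygies (k : Type*) [Field k] (j : ℕ) :
    relSet k j ⊆ monomialSyzygies (xyExponent j) := by
  rintro _ ⟨m, i, -, hm, hi, rfl⟩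
  refine ⟨⟨m + i, by omega⟩, ⟨i, by omega⟩, ?_⟩
  rw [monomialSyzygy_xyExponent_of_le k (Fin.mk_le_mk.mpr (by omega))]
  simp

theorem span_relSet (k : Type*) [Field k] (j : ℕ) :
    Submodule.span (MvPolynomial (Fin 2) k) (relSet k j) =
      Submodule.span (MvPolynomial (Fin 2) k) (monomialSyzygies (xyExponent j)) := by
  refine le_antisymm (Submodule.span_mono (relSet_subset_monomialSyzygies k j)) ?_
  rw [Submodule.span_le]
  rintro _ ⟨i, i', rfl⟩
  rcases lt_trichotomy i' i with h | rfl | h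
  · exact Submodule.subset_span (monomialSyzygy_xyExponent_mem_relSet k h)
  · rw [monomialSyzygy_self]
    exact zero_mem _
  · rw [monomialSyzygy_swap]
    exact neg_mem (Submodule.subset_span (monomialSyzygy_xyExponent_mem_relSet k h))

theorem range_monomialCombination_xyExponent (k : Type*) [CommRing k] (j : ℕ) :
    LinearMap.range (monomialCombination (k := k) (xyExponent j)) =
      Ideal.span {f | ∃ i ≤ j, f = X 0 ^ (j - i) * X 1 ^ i} := by
  rw [monomialCombination, Fintype.range_linearCombination]
  congr 1
  ext f
  simp only [Set.mem_range, monomial_xyExponent, Set.mem_ofPred_eq]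
  constructor
  · rintro ⟨i, rfl⟩
    exact ⟨i, i.is_le, rfl⟩
  · rintro ⟨i, hi, rfl⟩
    exact ⟨⟨i, by omega⟩, rfl⟩

theorem stmt13_general (k : Type*) [Field k] (j : ℕ) :
    ∃ φ : ((Fin (j + 1) → MvPolynomial (Fin 2) k) ⧸
            Submodule.span (MvPolynomial (Fin 2) k) (relSet k j))
          ≃ₗ[MvPolynomial (Fin 2) k]
          (Ideal.span {f : MvPolynomial (Fin 2) k | ∃ i ≤ j, f = X 0 ^ (j - i) * X 1 ^ i}
            : Ideal (MvPolynomial (Fin 2) k)),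
      ∀ i : Fin (j + 1),
        (φ (Submodule.Quotient.mk (Pi.single i 1)) : MvPolynomial (Fin 2) k)
          = X 0 ^ (j - (i : ℕ)) * X 1 ^ (i : ℕ) := by
  let ψ := monomialCombination (k := k) (xyExponent j)
  have hker : Submodule.span _ (relSet k j) = LinearMap.ker ψ := by
    rw [span_relSet, ker_monomialCombination]
  refine ⟨(Submodule.quotEquivOfEq _ _ hker).trans (ψ.quotKerEquivRange.trans
    (LinearEquiv.ofEq _ _ (range_monomialCombination_xyExponent k j))), fun i => ?_⟩
  rw [LinearEquiv.trans_apply, Submodule.quotEquivOfEq_mk, LinearEquiv.trans_apply,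
    LinearEquiv.coe_ofEq_apply, LinearMap.quotKerEquivRange_apply_mk, monomialCombination_single,
    one_mul, monomial_xyExponent]

theorem stmt13 (k : Type*) [Field k] (j : ℕ) (hj : 1 ≤ j) :
    ∃ φ : ((Fin (j + 1) → MvPolynomial (Fin 2) k) ⧸
            Submodule.span (MvPolynomial (Fin 2) k) (relSet k j))
          ≃ₗ[MvPolynomial (Fin 2) k]
          (Ideal.span {f : MvPolynomial (Fin 2) k | ∃ i ≤ j, f = X 0 ^ (j - i) * X 1 ^ i}
            : Ideal (MvPolynomial (Fin 2) k)),
      ∀ i : Fin (j + 1),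
        (φ (Submodule.Quotient.mk (Pi.single i 1)) : MvPolynomial (Fin 2) k)
          = X 0 ^ (j - (i : ℕ)) * X 1 ^ (i : ℕ) :=
  stmt13_general k j
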